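/- Let η : ℝ → [0, ∞) and let φ, ψ : ℝ → ℝ be functions with φ ≤ 0 bounded and measurable, satisfying the feasibility condition φ(γ) + ψ(t) ≤ η(t)·(1 − cos(γt)) for all γ, t ∈ ℝ. Let F : ℝ → [0, ∞) be even, integrable, with ∫_ℝ F = 1, and set F̂(t) = ∫_ℝ F(u) cos(ut) du and (F*φ)(γ) = ∫_ℝ F(γ − ξ)·φ(ξ) dξ. Then for all γ, t ∈ ℝ one has (F*φ)(γ) + ψ(t) ≤ η(t)·(1 − F̂(t)·cos(γt)). -/

import Mathlib

/-!
Integrate the feasibility inequality at `(ξ, t)` against the probability density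
`ξ ↦ F (γ - ξ)`. The left side becomes `(F * φ)(γ) + ψ t` because the density has mass one.
On the right, the substitution `ξ = γ - u` and `cos ((γ - u) t) = cos (γ t) cos (u t) + sin (γ t) sin (u t)`
give `∫ F (γ - ξ) cos (ξ t) dξ = F̂(t) cos (γ t)`: the sine term integrates to zero since `F` is even.
-/

open MeasureTheory Real

theorem Function.Odd.integral_eq_zero {G E : Type*} [MeasurableSpace G] [AddGroup G]
    [MeasurableNeg G] [NormedAddCommGroup E] [NormedSpace ℝ E] {μ : Measure G}
    [μ.IsNegInvariant] {f : G → E} (hf : f.Odd) : ∫ x, f x ∂μ = 0 := by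
  have h := integral_neg_eq_self f μ
  simp only [hf.eq, integral_neg] at h
  have h2 : (2 : ℝ) • ∫ x, f x ∂μ = 0 := by
    rw [two_smul]; nth_rewrite 1 [← h]; exact neg_add_cancel _
  exact (smul_eq_zero.mp h2).resolve_left two_ne_zero

theorem MeasureTheory.Integrable.mul_cos_mul {F : ℝ → ℝ} (hF : Integrable F) (t : ℝ) :
    Integrable fun u => F u * cos (u * t) :=
  hF.mul_bdd (by fun_prop) (.of_forall fun u => by simpa using abs_cos_le_one (u * t))

theorem MeasureTheory.Integrable.mul_sin_mul {F : ℝ → ℝ} (hF : Integrable F) (t : ℝ) :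
    Integrable fun u => F u * sin (u * t) :=
  hF.mul_bdd (by fun_prop) (.of_forall fun u => by simpa using abs_sin_le_one (u * t))

theorem integral_mul_sin_mul_eq_zero {F : ℝ → ℝ} (hF_even : F.Even) (t : ℝ) :
    ∫ u, F u * sin (u * t) = 0 :=
  Function.Odd.integral_eq_zero <| hF_even.mul_odd fun u => by rw [neg_mul, sin_neg]

theorem integral_sub_mul_cos_mul {F : ℝ → ℝ} (hF_even : F.Even) (hF : Integrable F) (γ t : ℝ) :
    ∫ ξ, F (γ - ξ) * cos (ξ * t) = (∫ u, F u * cos (u * t)) * cos (γ * t) := by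
  have hsubst := integral_sub_left_eq_self (fun u => F u * cos ((γ - u) * t)) volume γ
  simp only [sub_sub_cancel] at hsubst
  calc ∫ ξ, F (γ - ξ) * cos (ξ * t)
      = ∫ u, cos (γ * t) * (F u * cos (u * t)) + sin (γ * t) * (F u * sin (u * t)) := by
        rw [hsubst]; congr 1; ext u; rw [sub_mul, cos_sub]; ring
    _ = (∫ u, F u * cos (u * t)) * cos (γ * t) := by
        rw [integral_add ((hF.mul_cos_mul t).const_mul _) ((hF.mul_sin_mul t).const_mul _),
          integral_const_mul, integral_const_mul, integral_mul_sin_mul_eq_zero hF_even, mul_zero,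
          add_zero, mul_comm]

/-- The two-way Fejér identity. -/
theorem integral_sub_mul_one_sub_cos_mul {F : ℝ → ℝ} (hF_even : F.Even) (hF : Integrable F)
    (hF_mass : ∫ x, F x = 1) (γ t : ℝ) :
    ∫ ξ, F (γ - ξ) * (1 - cos (ξ * t)) = 1 - (∫ u, F u * cos (u * t)) * cos (γ * t) := by
  have hFγ : Integrable fun ξ => F (γ - ξ) := hF.comp_sub_left γ
  simp only [mul_sub, mul_one]
  rw [integral_sub hFγ (hFγ.mul_cos_mul t),
    integral_sub_left_eq_self F volume γ, hF_mass, integral_sub_mul_cos_mul hF_even hF]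

theorem integral_mul_add_const_of_integral_eq_one {α : Type*} [MeasurableSpace α]
    {μ : Measure α} {G f : α → ℝ} (hG : Integrable G μ) (hG_mass : ∫ x, G x ∂μ = 1)
    (hGf : Integrable (fun x => G x * f x) μ) (c : ℝ) :
    ∫ x, G x * (f x + c) ∂μ = (∫ x, G x * f x ∂μ) + c := by
  simp only [mul_add]
  rw [integral_add hGf (hG.mul_const c), integral_mul_const, hG_mass, one_mul]

theorem convolved_feasibility_general (η φ ψ : ℝ → ℝ)
    (hφ_bdd : ∃ C, ∀ γ, |φ γ| ≤ C) (hφ_meas : Measurable φ)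
    (hfeas : ∀ γ t, φ γ + ψ t ≤ η t * (1 - Real.cos (γ * t)))
    (F : ℝ → ℝ) (hF_nonneg : ∀ x, 0 ≤ F x) (hF_even : ∀ x, F (-x) = F x)
    (hF_int : Integrable F (volume : Measure ℝ)) (hF_mass : ∫ x : ℝ, F x = 1)
    (γ t : ℝ) :
    (∫ ξ : ℝ, F (γ - ξ) * φ ξ) + ψ t
      ≤ η t * (1 - (∫ u : ℝ, F u * Real.cos (u * t)) * Real.cos (γ * t)) := by
  obtain ⟨C, hC⟩ := hφ_bdd
  have hFγ : Integrable fun ξ => F (γ - ξ) := hF_int.comp_sub_left γ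
  have hFγ_mass : ∫ ξ, F (γ - ξ) = 1 := by rw [integral_sub_left_eq_self F volume γ, hF_mass]
  have hFγφ : Integrable fun ξ => F (γ - ξ) * φ ξ :=
    hFγ.mul_bdd hφ_meas.aestronglyMeasurable (.of_forall fun ξ => by simpa using hC ξ)
  have hFγ_cos : Integrable fun ξ => F (γ - ξ) * (1 - cos (ξ * t)) :=
    hFγ.mul_bdd (c := 2) (by fun_prop) (.of_forall fun ξ => by
      rw [norm_eq_abs, abs_le]; constructor <;> linarith [neg_one_le_cos (ξ * t), cos_le_one (ξ * t)])
  calc (∫ ξ, F (γ - ξ) * φ ξ) + ψ t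
      = ∫ ξ, F (γ - ξ) * (φ ξ + ψ t) :=
        (integral_mul_add_const_of_integral_eq_one hFγ hFγ_mass hFγφ _).symm
    _ ≤ ∫ ξ, η t * (F (γ - ξ) * (1 - cos (ξ * t))) := by
        have hFγφψ : Integrable fun ξ => F (γ - ξ) * (φ ξ + ψ t) :=
          (hFγφ.add (hFγ.mul_const (ψ t))).congr (.of_forall fun ξ => (mul_add ..).symm)
        refine integral_mono hFγφψ (hFγ_cos.const_mul _) fun ξ => ?_
        rw [mul_left_comm]
        exact mul_le_mul_of_nonneg_left (hfeas ξ t) (hF_nonneg _)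
    _ = η t * (1 - (∫ u, F u * cos (u * t)) * cos (γ * t)) := by
        rw [integral_const_mul, integral_sub_mul_one_sub_cos_mul hF_even hF_int hF_mass]

/-- Convolved feasibility step (eq. (conv-step) of the paper): if `φ ≤ 0` is bounded
and measurable, `η ≥ 0`, the pair `(φ, ψ)` satisfies the feasibility condition
`φ(γ) + ψ(t) ≤ η(t)(1 − cos(γt))`, and `F` is an even nonnegative integrable
probability density with cosine transform `F̂(t) = ∫ F(u) cos(ut) du`, then
`(F*φ)(γ) + ψ(t) ≤ η(t)(1 − F̂(t) cos(γt))` for all `γ, t`. -/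
theorem convolved_feasibility (η φ ψ : ℝ → ℝ)
    (hη : ∀ t, 0 ≤ η t)
    (hφ_nonpos : ∀ γ, φ γ ≤ 0) (hφ_bdd : ∃ C, ∀ γ, |φ γ| ≤ C) (hφ_meas : Measurable φ)
    (hfeas : ∀ γ t, φ γ + ψ t ≤ η t * (1 - Real.cos (γ * t)))
    (F : ℝ → ℝ) (hF_nonneg : ∀ x, 0 ≤ F x) (hF_even : ∀ x, F (-x) = F x)
    (hF_int : Integrable F (volume : Measure ℝ)) (hF_mass : ∫ x : ℝ, F x = 1)
    (γ t : ℝ) :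
    (∫ ξ : ℝ, F (γ - ξ) * φ ξ) + ψ t
      ≤ η t * (1 - (∫ u : ℝ, F u * Real.cos (u * t)) * Real.cos (γ * t)) :=
  convolved_feasibility_general η φ ψ hφ_bdd hφ_meas hfeas F hF_nonneg hF_even hF_int hF_mass γ t
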